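/- arXiv:1812.09561 — 3 statements merged into one kernel-verified Lean document; each statement's English description precedes it below -/
import Mathlib

section
/- Let V be a finite set of n vertices and let E be a finite multiset of edges, each edge being an unordered pair of (possibly equal) elements of V, with |E| < n. Let X ⊆ V be maximal (with respect to inclusion) among subsets of V such that the number of edges of E with both endpoints in X is at least |X|. Then no edge of E has exactly one endpoint in X; that is, every edge either has both endpoints in X or both endpoints in V∖X. -/
/-! A crossing edge `s(x, y)` with `x ∉ X`, `y ∈ X` is induced by `insert x X` but not by `X`,
so `insert x X` induces at least `|X| + 1` edges and contradicts the maximality of `X`. -/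

open Finset
open Classical

/-! A crossing edge `s(x, y)` with `x ∉ X`, `y ∈ X` is induced by `insert x X` but not by `X`,
so `insert x X` induces at least `|X| + 1` edges and contradicts the maximality of `X`. -/

theorem Multiset.card_filter_lt_card_filter {α : Type*} {p q : α → Prop} [DecidablePred p]
    [DecidablePred q] {s : Multiset α} (hpq : ∀ a, p a → q a) {a : α} (ha : a ∈ s)
    (hqa : q a) (hpa : ¬p a) : card (s.filter p) < card (s.filter q) := by
  refine card_lt_card (lt_of_le_of_ne (monotone_filter_right s hpq) fun h => hpa ?_)
  exact of_mem_filter (h ▸ mem_filter_of_mem ha hqa : a ∈ s.filter p)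

theorem no_crossing_edges_general {V : Type*} [Fintype V] [DecidableEq V]
    (E : Multiset (Sym2 V))
    (X : Finset V)
    (hX : X.card ≤ Multiset.card (E.filter fun e => ∀ x ∈ e, x ∈ X))
    (hmax : ∀ Y : Finset V, X ⊆ Y →
      Y.card ≤ Multiset.card (E.filter fun e => ∀ x ∈ e, x ∈ Y) → Y = X) :
    ∀ e ∈ E, (∀ x ∈ e, x ∈ X) ∨ (∀ x ∈ e, x ∉ X) := by
  intro e he
  by_contra! hcross
  obtain ⟨⟨x, hxe, hxX⟩, y, hye, hyX⟩ := hcross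
  have he_induced : ∀ z ∈ e, z ∈ insert x X := by
    rw [(Sym2.mem_and_mem_iff (ne_of_mem_of_not_mem hyX hxX).symm).1 ⟨hxe, hye⟩]
    simp [hyX]
  have hmore : Multiset.card (E.filter fun f => ∀ z ∈ f, z ∈ X) <
      Multiset.card (E.filter fun f => ∀ z ∈ f, z ∈ insert x X) :=
    Multiset.card_filter_lt_card_filter (fun f hf z hz => mem_insert_of_mem (hf z hz)) he
      he_induced fun h => hxX (h x hxe)
  have hXx : insert x X = X :=
    hmax _ (subset_insert x X) (by rw [card_insert_of_notMem hxX]; omega)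
  exact hxX (hXx ▸ mem_insert_self x X)

/-- In a multigraph with `|E| < |V|`, if `X` is maximal (w.r.t. inclusion)
among vertex sets inducing at least `|X|` edges, then no edge has exactly one endpoint
in `X`: every edge lies entirely inside `X` or entirely inside `V \ X`. -/
theorem no_crossing_edges {V : Type*} [Fintype V] [DecidableEq V]
    (E : Multiset (Sym2 V)) (hE : Multiset.card E < Fintype.card V)
    (X : Finset V)
    (hX : X.card ≤ Multiset.card (E.filter fun e => ∀ x ∈ e, x ∈ X))
    (hmax : ∀ Y : Finset V, X ⊆ Y →
      Y.card ≤ Multiset.card (E.filter fun e => ∀ x ∈ e, x ∈ Y) → Y = X) :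
    ∀ e ∈ E, (∀ x ∈ e, x ∈ X) ∨ (∀ x ∈ e, x ∉ X) :=
  no_crossing_edges_general E X hX hmax
end

section
/- Let H=(J,F) be a hereditary set system, let there be n ≥ 2 agents, and let agent i have nonnegative item values v_{i,j} with induced valuation v_i. Then for any single item j* ∈ J, the maximin share of agent i computed with n−1 parts over the item set J∖{j*} is at least the maximin share of agent i computed with n parts over J. That is, removing one item and one agent does not decrease any remaining agent's maximin share value. -/
open Finset

/-- The induced valuation of a set system `F` with item values `v`:
`hsVal F v S` is the maximum of `∑ j ∈ T, v j` over feasible `T ⊆ S`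
(with the empty set always a candidate, as `∅ ∈ F` for hereditary systems). -/
noncomputable def hsVal {ι : Type*} (F : Finset ι → Prop) (v : ι → ℝ) (S : Finset ι) : ℝ :=
  letI := Classical.decEq ι
  letI := Classical.decPred F
  (insert (∅ : Finset ι) (S.powerset.filter F)).sup' (Finset.insert_nonempty _ _)
    fun T => ∑ j ∈ T, v j

/-- The maximin share of an agent with valuation induced by `F` and `v`, for `n` agents:
the maximum over partitions of the items into `n` parts (fibers of `π : ι → Fin n`)
of the minimum value of a part. -/
noncomputable def hsMMS {ι : Type*} [Fintype ι] (F : Finset ι → Prop) (v : ι → ℝ) (n : ℕ) : ℝ :=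
  ⨆ π : ι → Fin n, ⨅ k : Fin n, hsVal F v (Finset.univ.filter fun j => π j = k)

/-- Maximin share with `n` parts over the item set `J'`: the maximum over partitions
of `J'` into `n` parts (fibers of `π` intersected with `J'`) of the minimum part value. -/
noncomputable def hsMMSOn {ι : Type*} [DecidableEq ι] (F : Finset ι → Prop) (v : ι → ℝ)
    (J' : Finset ι) (n : ℕ) : ℝ :=
  ⨆ π : ι → Fin n, ⨅ k : Fin n, hsVal F v (J'.filter fun j => π j = k)


lemma hsVal_mono {ι : Type*} (F : Finset ι → Prop) (v : ι → ℝ) {S S' : Finset ι}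
    (h : S ⊆ S') : hsVal F v S ≤ hsVal F v S' := by
  classical
  unfold hsVal
  apply Finset.sup'_le
  intro T hT
  refine Finset.le_sup' (fun T => ∑ j ∈ T, v j) ?_
  simp only [Finset.mem_insert, Finset.mem_filter, Finset.mem_powerset] at hT ⊢
  rcases hT with h0 | ⟨hsub, hF⟩
  · exact Or.inl h0
  · exact Or.inr ⟨hsub.trans h, hF⟩

/-- For `n ≥ 2` agents, removing any single item `j*` and one agent does
not decrease the maximin share of agent `i`: the maximin share with `n - 1` parts over
`J \ {j*}` is at least the maximin share with `n` parts over `J`. -/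
theorem mms_monotone_under_removal {ι : Type*} [Fintype ι] [DecidableEq ι]
    (F : Finset ι → Prop)
    (hHer : ∀ S T : Finset ι, F S → T ⊆ S → F T) (hEmpty : F ∅)
    (v : ι → ℝ) (hv : ∀ j, 0 ≤ v j)
    (n : ℕ) (hn : 2 ≤ n) (jstar : ι) :
    hsMMSOn F v Finset.univ n ≤ hsMMSOn F v (Finset.univ.erase jstar) (n - 1) := by
  classical
  obtain ⟨m, rfl⟩ : ∃ m, n = m + 2 := ⟨n - 2, by omega⟩
  unfold hsMMSOn
  apply ciSup_le
  intro π
  set kst : Fin (m + 2) := π jstar with hkst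
  set π' : ι → Fin (m + 1) := fun j => ((finSuccEquiv' kst) (π j)).getD 0 with hπ'
  have key : ∀ k' : Fin (m + 1),
      (Finset.univ.filter fun j => π j = kst.succAbove k') ⊆
      ((Finset.univ.erase jstar).filter fun j => π' j = k') := by
    intro k' j hj
    simp only [Finset.mem_filter, Finset.mem_univ, true_and] at hj
    simp only [Finset.mem_filter, Finset.mem_erase, Finset.mem_univ, and_true, true_and]
    refine ⟨?_, ?_⟩
    · rintro rfl
      exact Fin.succAbove_ne kst k' hj.symm
    · simp [hπ', hj, finSuccEquiv'_succAbove]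
  have step : (⨅ k : Fin (m + 2), hsVal F v (Finset.univ.filter fun j => π j = k)) ≤
      ⨅ k' : Fin (m + 1), hsVal F v ((Finset.univ.erase jstar).filter fun j => π' j = k') := by
    refine le_ciInf fun k' => ?_
    exact (ciInf_le (Finite.bddBelow_range _) (kst.succAbove k')).trans
      (hsVal_mono F v (key k'))
  exact step.trans (le_ciSup (f := fun π : ι → Fin (m + 1) =>
    ⨅ k : Fin (m + 1), hsVal F v ((Finset.univ.erase jstar).filter fun j => π j = k))
    (Finite.bddAbove_range _) π')
end

section
/- Let H=(J,F) be a hereditary set system, let there be n agents, let agent i have nonnegative item values v_{i,j} with induced valuation v_i, and let μ_1, ..., μ_n be positive reals. Then there exist pairwise disjoint subsets S_1, ..., S_n of J such that for every agent i with μ_i ≤ MMS(i), v_i(S_i) ≥ (11/30)·μ_i. -/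
open Finset

/-!
An agent `i` with `μ i ≤ MMS(i)` owns `n` pairwise disjoint feasible sets, each of additive value
at least `μ i`. Allocate greedily: among the feasible sets that avoid all bundles allocated so far
and are worth `11/30 · μ a` to some waiting agent `a`, pick an inclusion-minimal one and give it to
`a`. By minimality and heredity, every proper subset of an allocated bundle is worth less than
`11/30 · μ b` to every agent `b` still waiting.

Such a set exists as long as an agent waits, because that agent has more disjoint parts than there
are bundles, and then some part keeps value `11/30` outside the bundles. This is a charging
argument with the piecewise linear `weight`: measuring values in units of `μ`, a part keeping less
than `11/30` gives more than `19/30` to the bundles and receives total weight at least `1` from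
them, while a bundle whose proper subsets are all worth less than `11/30` hands out total weight
at most `1`. Double counting bounds the number of parts by the number of bundles.
-/

open Function

namespace HereditaryMMS

noncomputable def weight (t : ℝ) : ℝ :=
  if t ≤ 0 then 0
  else if t ≤ 1/10 then 15*t/7
  else if t ≤ 7/60 then 3/14
  else if t < 1/6 then 15*t/7 - 1/28
  else if t ≤ 11/60 then 9/28
  else if t ≤ 4/15 then 15*t/7 - 1/14
  else if t < 11/30 then 1/2
  else 1

section Weight

variable {t : ℝ}

lemma weight_nonneg (t : ℝ) : 0 ≤ weight t := by
  unfold weight; split_ifs <;> linarith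

lemma weight_zero : weight 0 = 0 := by simp [weight]

lemma weight_le_one (t : ℝ) : weight t ≤ 1 := by
  unfold weight; split_ifs <;> linarith

lemma weight_eq_one (h : 11/30 ≤ t) : weight t = 1 := by
  unfold weight; split_ifs <;> linarith

lemma weight_le_half (h : t < 11/30) : weight t ≤ 1/2 := by
  unfold weight; split_ifs <;> linarith

lemma weight_le_of_le_seven_sixtieths (h : t ≤ 7/60) : weight t ≤ 3/14 := by
  unfold weight; split_ifs <;> linarith

lemma weight_le_of_le_eleven_sixtieths (h : t ≤ 11/60) : weight t ≤ 9/28 := by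
  unfold weight; split_ifs <;> linarith

lemma linear_sub_le_weight (h : t < 11/30) :
    15 * t / 7 - ((if 1/10 < t then 1 else 0) + (if 1/6 < t then 1 else 0) +
      6 * (if 4/15 < t then 1 else 0)) / 28 ≤ weight t := by
  unfold weight; split_ifs <;> linarith

lemma plateau_le_weight (t : ℝ) :
    (6 * (if 1/10 < t then 1 else 0) + 3 * (if 1/6 < t then 1 else 0) +
      5 * (if 4/15 < t then 1 else 0)) / 28 ≤ weight t := by
  unfold weight; split_ifs <;> linarith

lemma weight_le_linear_sub (h0 : 0 ≤ t) (h : t < 11/30) :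
    weight t ≤ 15 * t / 7 - ((if 7/60 < t then 1 else 0) + (if 11/60 < t then 1 else 0)) / 28 := by
  unfold weight; split_ifs <;> linarith

variable {β : Type*} {s : Finset β} {γ : β → ℝ}

theorem one_le_sum_weight (hsum : 19/30 < ∑ j ∈ s, γ j) : 1 ≤ ∑ j ∈ s, weight (γ j) := by
  by_cases hbig : ∃ j ∈ s, 11/30 ≤ γ j
  · obtain ⟨j, hj, hjγ⟩ := hbig
    calc 1 = weight (γ j) := (weight_eq_one hjγ).symm
      _ ≤ _ := single_le_sum (fun k _ => weight_nonneg (γ k)) hj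
  push Not at hbig
  have hlin := sum_le_sum fun j hj => linear_sub_le_weight (hbig j hj)
  have hplat := sum_le_sum fun j (_ : j ∈ s) => plateau_le_weight (γ j)
  simp only [sum_sub_distrib, ← sum_div, sum_add_distrib, ← mul_sum, sum_boole] at hlin hplat
  set a := #{j ∈ s | 1/10 < γ j}
  set b := #{j ∈ s | 1/6 < γ j}
  set c := #{j ∈ s | 4/15 < γ j}
  have hcb : c ≤ b :=
    card_le_card (monotone_filter_right _ fun j _ (hj : 4/15 < γ j) => by linarith)
  have hba : b ≤ a :=
    card_le_card (monotone_filter_right _ fun j _ (hj : 1/6 < γ j) => by linarith)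
  -- Few large entries make the linear bound lose little; many make the plateau bound suffice.
  rcases (by omega : a + b + 6 * c ≤ 10 ∨ 28 ≤ 6 * a + 3 * b + 5 * c) with hlinc | hplatc
  · have : (a + b + 6 * c : ℝ) ≤ 10 := by exact_mod_cast hlinc
    linarith
  · have : (28 : ℝ) ≤ 6 * a + 3 * b + 5 * c := by exact_mod_cast hplatc
    linarith

theorem sum_weight_le_one [DecidableEq β] (h0 : ∀ j ∈ s, 0 ≤ γ j)
    (hsmall : ∀ j ∈ s, ∑ k ∈ s.erase j, γ k < 11/30) : ∑ j ∈ s, weight (γ j) ≤ 1 := by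
  rcases s.eq_empty_or_nonempty with rfl | hne
  · simp
  -- Bound a smallest entry by a plateau and the others, summing to `< 11/30`, linearly.
  obtain ⟨m, hm, hmin⟩ := exists_min_image s γ hne
  rw [← add_sum_erase s _ hm]
  set R := s.erase m
  have hR : ∑ j ∈ R, γ j < 11/30 := hsmall m hm
  have hR0 : ∀ j ∈ R, 0 ≤ γ j := fun j hj => h0 j (mem_of_mem_erase hj)
  have hRlt : ∀ j ∈ R, γ j < 11/30 := fun j hj => (single_le_sum hR0 hj).trans_lt hR
  rcases Nat.lt_or_ge #R 2 with hR1 | hR2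
  · rcases R.eq_empty_or_nonempty with hRe | ⟨x, hx⟩
    · rw [hRe, sum_empty]
      linarith [weight_le_one (γ m)]
    have hRW := sum_le_card_nsmul R _ _ fun j hj => weight_le_half (hRlt j hj)
    have hRcard : (#R : ℝ) ≤ 1 := by exact_mod_cast Nat.le_of_lt_succ hR1
    rw [nsmul_eq_mul] at hRW
    linarith [weight_le_half ((hmin x (mem_of_mem_erase hx)).trans_lt (hRlt x hx))]
  have hlin := sum_le_sum fun j hj => weight_le_linear_sub (hR0 j hj) (hRlt j hj)
  simp only [sum_sub_distrib, ← sum_div, sum_add_distrib, ← mul_sum, sum_boole] at hlin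
  rcases le_or_gt (γ m) (7/60) with hm7 | hm7
  · have : (0 : ℝ) ≤ #{j ∈ R | 7/60 < γ j} + #{j ∈ R | 11/60 < γ j} := by positivity
    linarith [weight_le_of_le_seven_sixtieths hm7]
  have hp : #{j ∈ R | 7/60 < γ j} = #R :=
    congrArg card (filter_true_of_mem fun j hj => hm7.trans_le (hmin j (mem_of_mem_erase hj)))
  have hm11 : γ m ≤ 11/60 := by
    have := card_nsmul_le_sum R γ (γ m) fun j hj => hmin j (mem_of_mem_erase hj)
    have hR2' : (2 : ℝ) ≤ #R := by exact_mod_cast hR2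
    rw [nsmul_eq_mul] at this
    nlinarith
  have hWm := weight_le_of_le_eleven_sixtieths hm11
  rw [hp] at hlin
  rcases (by omega : 3 ≤ #R + #{j ∈ R | 11/60 < γ j} ∨ (#R = 2 ∧ #{j ∈ R | 11/60 < γ j} = 0))
    with hc | ⟨hc2, hq⟩
  · have : (3 : ℝ) ≤ #R + #{j ∈ R | 11/60 < γ j} := by exact_mod_cast hc
    linarith
  · have hRW := sum_le_card_nsmul R _ _ fun j hj =>
      weight_le_of_le_eleven_sixtieths (not_lt.1 (filter_eq_empty_iff.1 (card_eq_zero.1 hq) hj))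
    rw [nsmul_eq_mul, hc2] at hRW
    linarith

theorem sum_weight_le_one_of_pos [DecidableEq β] (h0 : ∀ j ∈ s, 0 ≤ γ j)
    (hsmall : ∀ j ∈ s, 0 < γ j → ∑ k ∈ s.erase j, γ k < 11/30) : ∑ j ∈ s, weight (γ j) ≤ 1 := by
  rw [← sum_filter_of_ne (p := fun j => 0 < γ j) fun j hj hW =>
    (h0 j hj).lt_of_ne' fun h => hW (by rw [h, weight_zero])]
  refine sum_weight_le_one (fun j hj => h0 j (mem_filter.1 hj).1) fun j hj => ?_
  obtain ⟨hjs, hjpos⟩ := mem_filter.1 hj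
  refine (sum_le_sum_of_subset_of_nonneg (erase_subset_erase j (filter_subset _ s)) ?_).trans_lt
    (hsmall j hjs hjpos)
  exact fun k hk _ => h0 k (mem_of_mem_erase hk)

end Weight

section Charging

variable {ι : Type*} [DecidableEq ι]

lemma sum_sum_inter_eq_sum_inter_biUnion {κ : Type*} {t : Finset κ} {T : κ → Finset ι}
    (hT : (t : Set κ).PairwiseDisjoint T) (B : Finset ι) (u : ι → ℝ) :
    ∑ k ∈ t, ∑ g ∈ B ∩ T k, u g = ∑ g ∈ B ∩ t.biUnion T, u g := by
  rw [inter_biUnion, sum_biUnion (hT.mono fun _ => inter_subset_right)]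

theorem exists_le_sum_sdiff_biUnion {κ : Type*} [Fintype κ] {u : ι → ℝ} (hu : ∀ g, 0 ≤ u g)
    {μ : ℝ} (hμ : 0 < μ) {T : κ → Finset ι} (hT : Pairwise (Disjoint on T))
    (hTval : ∀ k, μ ≤ ∑ g ∈ T k, u g) {D : Finset (Finset ι)}
    (hD : (D : Set (Finset ι)).PairwiseDisjoint id)
    (hDmin : ∀ B ∈ D, ∀ C ⊂ B, ∑ g ∈ C, u g < 11/30 * μ) (hcard : #D < Fintype.card κ) :
    ∃ k, 11/30 * μ ≤ ∑ g ∈ T k \ D.biUnion id, u g := by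
  classical
  by_contra! hsmall
  -- the value of `B ∩ T k`, in units of `μ`
  set γ : Finset ι → κ → ℝ := fun B k => (∑ g ∈ B ∩ T k, u g) / μ
  have hpart : ∀ k, 1 ≤ ∑ B ∈ D, weight (γ B k) := by
    intro k
    refine one_le_sum_weight ?_
    rw [← sum_div, lt_div_iff₀ hμ]
    simp_rw [inter_comm _ (T k)]
    calc 19/30 * μ < ∑ g ∈ T k ∩ D.biUnion id, u g := by
          linarith [sum_inter_add_sum_sdiff (T k) (D.biUnion id) u, hTval k, hsmall k]
      _ = _ := (sum_sum_inter_eq_sum_inter_biUnion hD (T k) u).symm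
  have hbundle : ∀ B ∈ D, ∑ k, weight (γ B k) ≤ 1 := by
    intro B hB
    refine sum_weight_le_one_of_pos (fun k _ => div_nonneg (sum_nonneg fun g _ => hu g) hμ.le)
      fun k _ hpos => ?_
    have hmeet : ¬ Disjoint (T k) B := fun h => by
      simp [γ, disjoint_iff_inter_eq_empty.1 h.symm] at hpos
    rw [← sum_div, div_lt_iff₀ hμ, sum_erase_eq_sub (mem_univ k),
      sum_sum_inter_eq_sum_inter_biUnion (hT.set_pairwise _)]
    have hsub : ∑ g ∈ B ∩ univ.biUnion T, u g ≤ ∑ g ∈ B, u g :=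
      sum_le_sum_of_subset_of_nonneg inter_subset_left fun g _ _ => hu g
    linarith [sum_inter_add_sum_sdiff B (T k) u, hDmin B hB _ (sdiff_lt_left.2 hmeet)]
  have hcount : (Fintype.card κ : ℝ) ≤ #D := calc
    (Fintype.card κ : ℝ) = ∑ _k : κ, (1 : ℝ) := by simp
    _ ≤ ∑ k, ∑ B ∈ D, weight (γ B k) := sum_le_sum fun k _ => hpart k
    _ = ∑ B ∈ D, ∑ k, weight (γ B k) := sum_comm
    _ ≤ ∑ _B ∈ D, (1 : ℝ) := sum_le_sum hbundle
    _ = #D := by simp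
  exact (Nat.cast_le.1 hcount).not_gt hcard

variable {α κ : Type*} [Fintype κ] {F : Finset ι → Prop} {v : α → ι → ℝ} {μ : α → ℝ}

theorem exists_minimal_bundle (hHer : ∀ S T : Finset ι, F S → T ⊆ S → F T)
    (hv : ∀ a g, 0 ≤ v a g) (hμ : ∀ a, 0 < μ a) {A : Finset α} (hA : A.Nonempty)
    {D : Finset (Finset ι)} (hD : (D : Set (Finset ι)).PairwiseDisjoint id)
    (hDmin : ∀ B ∈ D, ∀ a ∈ A, ∀ C ⊂ B, ∑ g ∈ C, v a g < 11/30 * μ a)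
    (hcard : #D < Fintype.card κ)
    (hparts : ∀ a ∈ A, ∃ T : κ → Finset ι,
      Pairwise (Disjoint on T) ∧ ∀ k, F (T k) ∧ μ a ≤ ∑ g ∈ T k, v a g) :
    ∃ a ∈ A, ∃ C, F C ∧ Disjoint C (D.biUnion id) ∧ 11/30 * μ a ≤ ∑ g ∈ C, v a g ∧
      ∀ b ∈ A, ∀ C' ⊂ C, ∑ g ∈ C', v b g < 11/30 * μ b := by
  let Good : Finset ι → Prop := fun C =>
    F C ∧ Disjoint C (D.biUnion id) ∧ ∃ a ∈ A, 11/30 * μ a ≤ ∑ g ∈ C, v a g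
  have hgood : ∃ C, Good C := by
    obtain ⟨a, ha⟩ := hA
    obtain ⟨T, hT, hTval⟩ := hparts a ha
    obtain ⟨k, hk⟩ := exists_le_sum_sdiff_biUnion (hv a) (hμ a) hT (fun k => (hTval k).2) hD
      (fun B hB => hDmin B hB a ha) hcard
    exact ⟨T k \ D.biUnion id, hHer _ _ (hTval k).1 sdiff_subset, sdiff_disjoint, a, ha, hk⟩
  obtain ⟨C, ⟨hCF, hCD, a, ha, hCa⟩, hCmin⟩ := exists_minimal_of_wellFoundedLT Good hgood
  refine ⟨a, ha, C, hCF, hCD, hCa, fun b hb C' hC' => ?_⟩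
  by_contra! hC'b
  exact hC'.not_ge (hCmin ⟨hHer _ _ hCF hC'.subset, hCD.mono_left hC'.subset, b, hb, hC'b⟩ hC'.le)

theorem exists_allocation (hHer : ∀ S T : Finset ι, F S → T ⊆ S → F T)
    (hv : ∀ a g, 0 ≤ v a g) (hμ : ∀ a, 0 < μ a) (A : Finset α) (D : Finset (Finset ι))
    (hD : (D : Set (Finset ι)).PairwiseDisjoint id)
    (hDmin : ∀ B ∈ D, ∀ a ∈ A, ∀ C ⊂ B, ∑ g ∈ C, v a g < 11/30 * μ a)
    (hcard : #A + #D ≤ Fintype.card κ)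
    (hparts : ∀ a ∈ A, ∃ T : κ → Finset ι,
      Pairwise (Disjoint on T) ∧ ∀ k, F (T k) ∧ μ a ≤ ∑ g ∈ T k, v a g) :
    ∃ S : α → Finset ι, Pairwise (Disjoint on S) ∧ (∀ a, Disjoint (S a) (D.biUnion id)) ∧
      ∀ a ∈ A, F (S a) ∧ 11/30 * μ a ≤ ∑ g ∈ S a, v a g := by
  classical
  induction A using Finset.strongInduction generalizing D with
  | H A ih =>
  rcases A.eq_empty_or_nonempty with rfl | hA
  · exact ⟨fun _ => ∅, fun _ _ _ => disjoint_bot_left, fun _ => disjoint_bot_left, by simp⟩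
  obtain ⟨a, ha, C, hCF, hCD, hCa, hCmin⟩ :=
    exists_minimal_bundle hHer hv hμ hA hD hDmin (by have := hA.card_pos; omega) hparts
  have hD' : ((insert C D : Finset (Finset ι)) : Set (Finset ι)).PairwiseDisjoint id := by
    rw [coe_insert]
    exact hD.insert fun B hB _ => hCD.mono_right (subset_biUnion_of_mem id hB)
  obtain ⟨S, hS, hSD, hSval⟩ := ih (A.erase a) (erase_ssubset ha) (insert C D) hD'
    (fun B hB b hb => by
      rcases mem_insert.1 hB with rfl | hB
      · exact hCmin b (mem_of_mem_erase hb)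
      · exact hDmin B hB b (mem_of_mem_erase hb))
    (by have := card_erase_of_mem ha; have := card_insert_le C D; have := hA.card_pos; omega)
    (fun b hb => hparts b (mem_of_mem_erase hb))
  have hSC : ∀ b, Disjoint (S b) C := fun b =>
    (hSD b).mono_right (subset_biUnion_of_mem id (mem_insert_self C D))
  refine ⟨update S a C, ?_, fun b => ?_, fun b hb => ?_⟩
  · intro b c hbc
    by_cases hb : b = a
    · subst hb
      simpa [onFun, hbc.symm] using (hSC c).symm
    by_cases hc : c = a
    · subst hc
      simpa [onFun, hbc] using hSC b
    simpa [onFun, hb, hc] using hS hbc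
  · rcases eq_or_ne b a with rfl | hb
    · simpa using hCD
    · simpa [hb] using
        (hSD b).mono_right (biUnion_subset_biUnion_of_subset_left _ (subset_insert C D))
  · rcases eq_or_ne b a with rfl | hba
    · simpa using ⟨hCF, hCa⟩
    · simpa [hba] using hSval b (mem_erase.2 ⟨hba, hb⟩)

end Charging

section SetSystem

variable {ι : Type*}

lemma sum_le_hsVal {F : Finset ι → Prop} (v : ι → ℝ) {S T : Finset ι} (hT : F T) (hTS : T ⊆ S) :
    ∑ j ∈ T, v j ≤ hsVal F v S := by
  classical
  unfold hsVal
  exact le_sup' (fun T => ∑ j ∈ T, v j) (mem_insert_of_mem (mem_filter.2 ⟨mem_powerset.2 hTS, hT⟩))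

lemma exists_le_sum_of_le_hsVal {F : Finset ι → Prop} {v : ι → ℝ} {S : Finset ι} {μ : ℝ}
    (hμ : 0 < μ) (h : μ ≤ hsVal F v S) : ∃ T ⊆ S, F T ∧ μ ≤ ∑ j ∈ T, v j := by
  classical
  obtain ⟨T, hT, hμT⟩ := (le_sup'_iff _).1 h
  rcases mem_insert.1 hT with rfl | hT
  · simp only [sum_empty] at hμT
    exact absurd hμT hμ.not_ge
  · obtain ⟨hTS, hTF⟩ := mem_filter.1 hT
    exact ⟨T, mem_powerset.1 hTS, hTF, hμT⟩

theorem exists_disjoint_parts_of_le_hsMMS [Fintype ι] {F : Finset ι → Prop} {v : ι → ℝ} {n : ℕ}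
    {μ : ℝ} (hμ : 0 < μ) (h : μ ≤ hsMMS F v n) :
    ∃ T : Fin n → Finset ι, Pairwise (Disjoint on T) ∧ ∀ k, F (T k) ∧ μ ≤ ∑ j ∈ T k, v j := by
  have : Nonempty (ι → Fin n) := by
    by_contra! _
    simp only [hsMMS, Real.iSup_of_isEmpty] at h
    exact h.not_gt hμ
  obtain ⟨π, hπ⟩ := exists_eq_ciSup_of_finite
    (f := fun π : ι → Fin n => ⨅ k, hsVal F v {j | π j = k})
  have hfiber : ∀ k, μ ≤ hsVal F v {j | π j = k} := fun k =>
    h.trans (hπ.symm.le.trans (ciInf_le (Finite.bddBelow_range _) k))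
  choose T hTsub hTF hTval using fun k => exists_le_sum_of_le_hsVal hμ (hfiber k)
  refine ⟨T, fun k l hkl => ?_, fun k => ⟨hTF k, hTval k⟩⟩
  exact (disjoint_filter.2 fun j _ hk hl => hkl (hk.symm.trans hl)).mono (hTsub k) (hTsub l)

end SetSystem

end HereditaryMMS

open HereditaryMMS

theorem fair_division_with_estimates_general {ι : Type*} [Fintype ι] (F : Finset ι → Prop)
    (hHer : ∀ S T : Finset ι, F S → T ⊆ S → F T)
    (n : ℕ) (v : Fin n → ι → ℝ) (hv : ∀ i j, 0 ≤ v i j)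
    (μ : Fin n → ℝ) (hμ : ∀ i, 0 < μ i) :
    ∃ S : Fin n → Finset ι,
      (∀ i k : Fin n, i ≠ k → Disjoint (S i) (S k)) ∧
      ∀ i : Fin n, μ i ≤ hsMMS F (v i) n →
        (11 / 30 : ℝ) * μ i ≤ hsVal F (v i) (S i) := by
  classical
  obtain ⟨S, hS, -, hSval⟩ := exists_allocation (κ := Fin n) hHer hv hμ
    {i | μ i ≤ hsMMS F (v i) n} ∅ (by simp) (by simp)
    (by rw [card_empty, add_zero]; exact card_le_univ _)
    fun i hi => exists_disjoint_parts_of_le_hsMMS (hμ i) (mem_filter.1 hi).2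
  refine ⟨S, fun i k hik => hS hik, fun i hi => ?_⟩
  obtain ⟨hF, hval⟩ := hSval i (mem_filter.2 ⟨mem_univ i, hi⟩)
  exact hval.trans (sum_le_hsVal (v i) hF subset_rfl)

/-- Given positive reals `μ i`, there exist pairwise disjoint bundles such
that every agent whose `μ i` does not exceed its maximin share receives value at
least `(11/30) * μ i`. -/
theorem fair_division_with_estimates {ι : Type*} [Fintype ι] (F : Finset ι → Prop)
    (hHer : ∀ S T : Finset ι, F S → T ⊆ S → F T) (hEmpty : F ∅)
    (n : ℕ) (v : Fin n → ι → ℝ) (hv : ∀ i j, 0 ≤ v i j)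
    (μ : Fin n → ℝ) (hμ : ∀ i, 0 < μ i) :
    ∃ S : Fin n → Finset ι,
      (∀ i k : Fin n, i ≠ k → Disjoint (S i) (S k)) ∧
      ∀ i : Fin n, μ i ≤ hsMMS F (v i) n →
        (11 / 30 : ℝ) * μ i ≤ hsVal F (v i) (S i) :=
  fair_division_with_estimates_general F hHer n v hv μ hμ
end
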